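/- If G is a connected graph, then ρ(G) ≤ max over vertices v of sqrt(Σ_{u ∈ N(v)} d(u)), with equality if and only if G is regular or semiregular bipartite. -/

import Mathlib

open SimpleGraph Matrix

/-- The adjacency spectral radius of a finite graph: the supremum of its
adjacency eigenvalues. -/
noncomputable def specRad {V : Type*} [Fintype V] (G : SimpleGraph V) : ℝ :=
  letI := Classical.decEq V
  letI := Classical.decRel G.Adj
  sSup {t : ℝ | ∃ v : V → ℝ, v ≠ 0 ∧ G.adjMatrix ℝ *ᵥ v = t • v}
open scoped Classical in
/-- `Σ_{u ∈ N(v)} d(u)`, the sum of the degrees of the neighbours of `v`. -/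
noncomputable def nbrDegSum {V : Type*} [Fintype V] (G : SimpleGraph V) (v : V) : ℝ :=
  ∑ u : V, if G.Adj v u then ((G.neighborSet u).ncard : ℝ) else 0

/-! Put `s v = ∑_{u ∈ N(v)} d(u)`. For an eigenpair `A x = t x`, Cauchy–Schwarz on every
neighbourhood and double counting give
`t² ∑ x_v² + ∑_v (d(v) ∑_{N(v)} x² - (∑_{N(v)} x)²) = ∑_v s(v) x_v²`, hence `t² ≤ max s`.
If `ρ² = max s`, all Cauchy–Schwarz defects of an eigenvector `x` for `ρ` vanish, so `x` is
constant on every neighbourhood and, by connectivity, nowhere zero. Then `ρ x_u = d(u) x_v` for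
every edge `uv`, so `d(u) = d(w)` whenever `u ~ v ~ w`; in a connected graph a function invariant
under such two-step moves is constant or constant on the two sides of a bipartition. Conversely,
in a regular or semiregular bipartite graph `d(u) d(v) = c` on every edge, so `s ≤ c` and,
unless there are no edges, `(√d(v))_v` is an eigenvector with eigenvalue `√c`. -/

open Finset

theorem Finset.eq_of_sq_sum_eq_card_mul_sum_sq {ι α : Type*} [Field α] [LinearOrder α]
    [IsStrictOrderedRing α] {s : Finset ι} {f : ι → α}
    (h : (∑ i ∈ s, f i) ^ 2 = #s * ∑ i ∈ s, f i ^ 2) {i j : ι} (hi : i ∈ s) (hj : j ∈ s) :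
    f i = f j := by
  have lagrange : ∑ i ∈ s, ∑ j ∈ s, (f i - f j) ^ 2 =
      2 * (#s * ∑ i ∈ s, f i ^ 2 - (∑ i ∈ s, f i) ^ 2) := by
    simp only [sub_sq, sum_add_distrib, sum_sub_distrib, sum_const, nsmul_eq_mul,
      ← mul_sum, ← sum_mul]
    ring
  rw [h, sub_self, mul_zero, sum_eq_zero_iff_of_nonneg fun _ _ =>
    sum_nonneg fun _ _ => sq_nonneg _] at lagrange
  exact sub_eq_zero.1 <| pow_eq_zero_iff two_ne_zero |>.1 <|
    (sum_eq_zero_iff_of_nonneg fun _ _ => sq_nonneg _).1 (lagrange i hi) j hj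

theorem setOf_exists_eq_apply_eq_range {ι α : Type*} (f : ι → α) :
    {x | ∃ j, x = f j} = Set.range f := by
  simp only [Set.range, eq_comm]

theorem le_sSup_setOf_exists_eq {ι α : Type*} [ConditionallyCompleteLattice α] [Finite ι]
    (f : ι → α) (i : ι) : f i ≤ sSup {x | ∃ j, x = f j} := by
  rw [setOf_exists_eq_apply_eq_range]
  exact le_csSup (Set.finite_range f).bddAbove ⟨i, rfl⟩

theorem exists_sSup_setOf_exists_eq {ι α : Type*} [ConditionallyCompleteLinearOrder α] [Finite ι]
    [Nonempty ι] (f : ι → α) : ∃ i, sSup {x | ∃ j, x = f j} = f i := by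
  rw [setOf_exists_eq_apply_eq_range]
  obtain ⟨i, hi⟩ := (Set.range_nonempty f).csSup_mem (Set.finite_range f)
  exact ⟨i, hi.symm⟩

theorem Matrix.finite_setOf_exists_mulVec_eq_smul {n K : Type*} [Fintype n] [Field K]
    (A : Matrix n n K) : {t : K | ∃ x, x ≠ 0 ∧ A *ᵥ x = t • x}.Finite :=
  (Module.End.finite_hasEigenvalue (Matrix.mulVecLin A)).subset fun _ ⟨_, hx0, hx⟩ =>
    Module.End.hasEigenvalue_of_hasEigenvector ⟨Module.End.mem_eigenspace_iff.2 hx, hx0⟩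

theorem Matrix.IsHermitian.exists_mulVec_eq_smul {n : Type*} [Fintype n] [DecidableEq n]
    [Nonempty n] {A : Matrix n n ℝ} (hA : A.IsHermitian) :
    ∃ t : ℝ, ∃ x, x ≠ 0 ∧ A *ᵥ x = t • x := by
  obtain ⟨i⟩ := ‹Nonempty n›
  exact ⟨hA.eigenvalues i, hA.eigenvectorBasis i,
    fun h => hA.eigenvectorBasis.orthonormal.ne_zero i (by ext j; exact congrFun h j),
    hA.mulVec_eigenvectorBasis i⟩

namespace SimpleGraph

variable {V : Type*} [Fintype V] (G : SimpleGraph V)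

theorem ncard_neighborSet_eq_degree [DecidableRel G.Adj] (v : V) :
    (G.neighborSet v).ncard = G.degree v := by
  rw [← card_neighborFinset_eq_degree, neighborFinset_def, Set.ncard_eq_toFinset_card']

theorem nbrDegSum_eq_sum_degree [DecidableRel G.Adj] (v : V) :
    nbrDegSum G v = ∑ u ∈ G.neighborFinset v, (G.degree u : ℝ) := by
  rw [nbrDegSum, neighborFinset_eq_filter, sum_filter]
  refine sum_congr rfl fun u _ => ?_
  by_cases h : G.Adj v u <;> simp [h, ncard_neighborSet_eq_degree]

theorem sum_nbrDegSum_mul_sq_le {r : ℝ} (hs : ∀ v, nbrDegSum G v ≤ r) (x : V → ℝ) :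
    ∑ v, nbrDegSum G v * x v ^ 2 ≤ r * ∑ v, x v ^ 2 := by
  rw [mul_sum]
  exact sum_le_sum fun v _ => mul_le_mul_of_nonneg_right (hs v) (sq_nonneg _)

section Spectrum

variable [DecidableRel G.Adj]

theorem specRad_eq_sSup :
    specRad G = sSup {t : ℝ | ∃ x, x ≠ 0 ∧ G.adjMatrix ℝ *ᵥ x = t • x} := by
  rw [specRad]
  congr!

theorem le_specRad {t : ℝ} {x : V → ℝ} (hx0 : x ≠ 0) (hx : G.adjMatrix ℝ *ᵥ x = t • x) :
    t ≤ specRad G := by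
  rw [specRad_eq_sSup]
  exact le_csSup (finite_setOf_exists_mulVec_eq_smul _).bddAbove ⟨x, hx0, hx⟩

theorem specRad_le {r : ℝ} (hr : 0 ≤ r)
    (h : ∀ t x, x ≠ 0 → G.adjMatrix ℝ *ᵥ x = t • x → t ≤ r) : specRad G ≤ r := by
  rw [specRad_eq_sSup]
  exact Real.sSup_le (fun t ⟨x, hx0, hx⟩ => h t x hx0 hx) hr

theorem exists_mulVec_eq_specRad_smul [DecidableEq V] [Nonempty V] :
    ∃ x, x ≠ 0 ∧ G.adjMatrix ℝ *ᵥ x = specRad G • x := by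
  rw [specRad_eq_sSup]
  obtain ⟨t, ht⟩ := (G.isHermitian_adjMatrix ℝ).exists_mulVec_eq_smul
  exact Set.Nonempty.csSup_mem ⟨t, ht⟩ (finite_setOf_exists_mulVec_eq_smul _)

end Spectrum

section Eigenvector

variable [DecidableRel G.Adj] {x : V → ℝ} {t : ℝ}

theorem adjMatrix_mulVec_apply_of_forall_adj {c : ℝ} {v : V} (h : ∀ u, G.Adj v u → x u = c) :
    (G.adjMatrix ℝ *ᵥ x) v = G.degree v * c := by
  rw [adjMatrix_mulVec_apply, sum_congr rfl fun u hu => h u ((G.mem_neighborFinset v u).1 hu),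
    sum_const, card_neighborFinset_eq_degree, nsmul_eq_mul]

theorem degree_le_nbrDegSum {u v : V} (h : G.Adj v u) : (G.degree u : ℝ) ≤ nbrDegSum G v := by
  rw [nbrDegSum_eq_sum_degree]
  exact single_le_sum (f := fun u => (G.degree u : ℝ)) (fun _ _ => Nat.cast_nonneg _)
    ((G.mem_neighborFinset v u).2 h)

theorem sum_degree_mul_sum_sq (x : V → ℝ) :
    ∑ v, (G.degree v : ℝ) * ∑ u ∈ G.neighborFinset v, x u ^ 2 =
      ∑ u, nbrDegSum G u * x u ^ 2 := by
  have h := dotProduct_mulVec (fun v => (G.degree v : ℝ)) (G.adjMatrix ℝ) fun u => x u ^ 2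
  simpa only [dotProduct, adjMatrix_mulVec_apply, adjMatrix_vecMul_apply,
    ← nbrDegSum_eq_sum_degree] using h

theorem sq_mul_sum_sq_add_sum_defect (hx : G.adjMatrix ℝ *ᵥ x = t • x) :
    t ^ 2 * ∑ v, x v ^ 2 + ∑ v, ((G.degree v : ℝ) * ∑ u ∈ G.neighborFinset v, x u ^ 2 -
      (∑ u ∈ G.neighborFinset v, x u) ^ 2) = ∑ v, nbrDegSum G v * x v ^ 2 := by
  have hsq : ∀ v, (∑ u ∈ G.neighborFinset v, x u) ^ 2 = t ^ 2 * x v ^ 2 := fun v => by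
    rw [← adjMatrix_mulVec_apply, hx, Pi.smul_apply, smul_eq_mul, mul_pow]
  simp only [← sum_degree_mul_sum_sq, sum_sub_distrib, hsq, ← mul_sum]
  ring

theorem defect_nonneg (x : V → ℝ) (v : V) :
    0 ≤ (G.degree v : ℝ) * ∑ u ∈ G.neighborFinset v, x u ^ 2 -
      (∑ u ∈ G.neighborFinset v, x u) ^ 2 := by
  rw [sub_nonneg, ← card_neighborFinset_eq_degree]
  exact sq_sum_le_card_mul_sum_sq

theorem sq_le_of_mulVec_eq_smul {r : ℝ} (hx0 : x ≠ 0) (hx : G.adjMatrix ℝ *ᵥ x = t • x)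
    (hs : ∀ v, nbrDegSum G v ≤ r) : t ^ 2 ≤ r := by
  obtain ⟨v, hv⟩ := Function.ne_iff.1 hx0
  have hpos : 0 < ∑ v, x v ^ 2 :=
    sum_pos' (fun _ _ => sq_nonneg _) ⟨v, mem_univ v, sq_pos_of_ne_zero hv⟩
  have hdefect := sum_nonneg fun v (_ : v ∈ univ) => G.defect_nonneg x v
  have hbound := G.sum_nbrDegSum_mul_sq_le hs x
  exact le_of_mul_le_mul_right (by linarith [G.sq_mul_sum_sq_add_sum_defect hx]) hpos

theorem apply_eq_of_adj_of_adj (hx : G.adjMatrix ℝ *ᵥ x = t • x)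
    (hs : ∀ v, nbrDegSum G v ≤ t ^ 2) {u v w : V} (huv : G.Adj u v) (hvw : G.Adj v w) :
    x u = x w := by
  have hbound := G.sum_nbrDegSum_mul_sq_le hs x
  have hzero := (sum_eq_zero_iff_of_nonneg fun v (_ : v ∈ univ) => G.defect_nonneg x v).1
    (le_antisymm (by linarith [G.sq_mul_sum_sq_add_sum_defect hx])
      (sum_nonneg fun v _ => G.defect_nonneg x v)) v (mem_univ v)
  rw [sub_eq_zero, ← card_neighborFinset_eq_degree] at hzero
  exact eq_of_sq_sum_eq_card_mul_sum_sq hzero.symm ((G.mem_neighborFinset v u).2 huv.symm)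
    ((G.mem_neighborFinset v w).2 hvw)

theorem apply_ne_zero (hG : G.Connected) (hx0 : x ≠ 0) (hx : G.adjMatrix ℝ *ᵥ x = t • x)
    (ht : t ≠ 0) (hs : ∀ v, nbrDegSum G v ≤ t ^ 2) (v : V) : x v ≠ 0 := by
  refine fun hv => hx0 (funext fun w => ?_)
  obtain ⟨p⟩ := hG.preconnected v w
  induction p with
  | nil => exact hv
  | @cons u u' _ huu' _ ih =>
    refine ih ?_
    have h := congrFun hx u'
    rw [G.adjMatrix_mulVec_apply_of_forall_adj fun z hz =>
      G.apply_eq_of_adj_of_adj hx hs hz.symm huu'.symm, hv] at h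
    simpa [ht] using h.symm

theorem degree_eq_of_adj_of_adj (hG : G.Connected) (hx0 : x ≠ 0)
    (hx : G.adjMatrix ℝ *ᵥ x = t • x) (hs : ∀ v, nbrDegSum G v ≤ t ^ 2) {u v w : V}
    (huv : G.Adj u v) (hvw : G.Adj v w) : G.degree u = G.degree w := by
  have ht : t ≠ 0 := by
    rintro rfl
    have hle := (G.degree_le_nbrDegSum huv.symm).trans (hs v)
    have hpos := G.degree_pos_iff_exists_adj u |>.2 ⟨v, huv⟩
    simp_all
  have key : ∀ {u}, G.Adj u v → t * x u = G.degree u * x v := fun {u} huv => by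
    rw [← G.adjMatrix_mulVec_apply_of_forall_adj fun z hz =>
      G.apply_eq_of_adj_of_adj hx hs hz.symm huv, hx, Pi.smul_apply, smul_eq_mul]
  have h := key huv
  rw [G.apply_eq_of_adj_of_adj hx hs huv hvw, key hvw.symm] at h
  exact_mod_cast mul_right_cancel₀ (G.apply_ne_zero hG hx0 hx ht hs v) h.symm

end Eigenvector

section Parity

variable {W α : Type*} {H : SimpleGraph W} {f : W → α}

theorem Walk.apply_eq_ite_even (hf : ∀ u v w, H.Adj u v → H.Adj v w → f u = f w)
    {v₀ v₁ : W} (h₀₁ : H.Adj v₀ v₁) {u : W} (p : H.Walk u v₀) :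
    f u = if Even p.length then f v₀ else f v₁ := by
  -- the induction also has to track the value at the neighbours of the start
  suffices f u = (if Even p.length then f v₀ else f v₁) ∧
      ∀ w, H.Adj w u → f w = if Even (p.length + 1) then f v₀ else f v₁ from this.1
  induction p with
  | nil => exact ⟨by simp, fun w hw => by simp [hf w _ v₁ hw h₀₁]⟩
  | cons huu' q ih =>
    obtain ⟨ih_start, ih_adj⟩ := ih h₀₁
    refine ⟨ih_adj _ huu', fun w hw => ?_⟩
    rw [hf w _ _ hw huu', ih_start, Walk.length_cons]
    simp only [Nat.even_add_one, not_not]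

theorem Connected.exists_eq_or_bipartite (hH : H.Connected)
    (hf : ∀ u v w, H.Adj u v → H.Adj v w → f u = f w) :
    (∃ c, ∀ v, f v = c) ∨ ∃ X : Set W, (∀ u v, H.Adj u v → (u ∈ X ↔ v ∉ X)) ∧
      ∃ a b, (∀ v ∈ X, f v = a) ∧ ∀ v ∉ X, f v = b := by
  obtain ⟨v₀⟩ := hH.nonempty
  by_cases hedge : ∃ v₁, H.Adj v₀ v₁
  swap
  · refine .inl ⟨f v₀, fun v => (hH.preconnected v₀ v).elim fun p => ?_⟩
    cases p with
    | nil => rfl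
    | cons h _ => exact absurd ⟨_, h⟩ hedge
  obtain ⟨v₁, h₀₁⟩ := hedge
  have hwalk := fun {u} (p : H.Walk u v₀) => Walk.apply_eq_ite_even hf h₀₁ p
  by_cases hab : f v₀ = f v₁
  · refine .inl ⟨f v₀, fun v => ?_⟩
    obtain ⟨p⟩ := hH.preconnected v v₀
    rw [hwalk p]
    split_ifs <;> simp [hab]
  refine .inr ⟨{v | f v = f v₀}, fun u v huv => ?_, f v₀, f v₁, fun v hv => hv, fun v hv => ?_⟩
  · obtain ⟨p⟩ := hH.preconnected u v₀
    have hv := hwalk (p.cons huv.symm)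
    change f u = f v₀ ↔ ¬f v = f v₀
    rw [hwalk p, hv, Walk.length_cons]
    simp only [Nat.even_add_one]
    split_ifs <;> simp_all [Ne.symm hab]
  · obtain ⟨p⟩ := hH.preconnected v v₀
    change ¬f v = f v₀ at hv
    rw [hwalk p] at hv ⊢
    split_ifs at hv ⊢ <;> simp_all

theorem exists_forall_adj_mul_eq [CommMagma α]
    (h : (∃ c, ∀ v, f v = c) ∨ ∃ X : Set W, (∀ u v, H.Adj u v → (u ∈ X ↔ v ∉ X)) ∧
      ∃ a b, (∀ v ∈ X, f v = a) ∧ ∀ v ∉ X, f v = b) :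
    ∃ c, ∀ u v, H.Adj u v → f u * f v = c := by
  rcases h with ⟨c, hc⟩ | ⟨X, hX, a, b, ha, hb⟩
  · exact ⟨c * c, fun u v _ => by rw [hc, hc]⟩
  refine ⟨a * b, fun u v huv => ?_⟩
  by_cases hu : u ∈ X
  · rw [ha u hu, hb v ((hX u v huv).1 hu)]
  · rw [hb u hu, ha v (not_not.1 (mt (hX u v huv).2 hu)), mul_comm]

end Parity

section DegreeProduct

variable [DecidableRel G.Adj] {c : ℕ}

theorem degree_eq_div_of_adj (hc : ∀ u v, G.Adj u v → G.degree u * G.degree v = c) {u v : V}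
    (h : G.Adj v u) : (G.degree u : ℝ) = c / G.degree v := by
  have hv : (G.degree v : ℝ) ≠ 0 :=
    Nat.cast_ne_zero.2 (G.degree_pos_iff_exists_adj v |>.2 ⟨u, h⟩).ne'
  rw [eq_div_iff hv, mul_comm]
  exact_mod_cast hc v u h

theorem nbrDegSum_le_of_degree_mul_eq (hc : ∀ u v, G.Adj u v → G.degree u * G.degree v = c)
    (v : V) : nbrDegSum G v ≤ c := by
  rw [nbrDegSum_eq_sum_degree, ← adjMatrix_mulVec_apply,
    G.adjMatrix_mulVec_apply_of_forall_adj fun u h => G.degree_eq_div_of_adj hc h]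
  by_cases h0 : (G.degree v : ℝ) = 0
  · simp [h0]
  · rw [mul_div_cancel₀ _ h0]

theorem adjMatrix_mulVec_sqrt_degree (hc : ∀ u v, G.Adj u v → G.degree u * G.degree v = c) :
    G.adjMatrix ℝ *ᵥ (fun v => √(G.degree v)) = √c • fun v => √(G.degree v) := by
  ext v
  rw [G.adjMatrix_mulVec_apply_of_forall_adj fun u h => by
    rw [G.degree_eq_div_of_adj hc h, Real.sqrt_div (Nat.cast_nonneg _)]]
  by_cases h0 : (G.degree v : ℝ) = 0
  · simp [h0]
  · have hsqrt : √(G.degree v : ℝ) ≠ 0 := by positivity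
    rw [Pi.smul_apply, smul_eq_mul]
    field_simp
    rw [Real.sq_sqrt (Nat.cast_nonneg _), mul_comm]

theorem sqrt_nbrDegSum_le_specRad (hc : ∀ u v, G.Adj u v → G.degree u * G.degree v = c)
    (v : V) : √(nbrDegSum G v) ≤ specRad G := by
  by_cases hedge : ∃ p q, G.Adj p q
  · obtain ⟨p, q, hpq⟩ := hedge
    have hne : (fun v => √(G.degree v : ℝ)) ≠ 0 := Function.ne_iff.2 ⟨p, by
      simpa using ((G.degree_pos_iff_exists_adj p).2 ⟨q, hpq⟩).ne'⟩
    exact (Real.sqrt_le_sqrt (G.nbrDegSum_le_of_degree_mul_eq hc v)).trans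
      (G.le_specRad hne (G.adjMatrix_mulVec_sqrt_degree hc))
  · push Not at hedge
    have hs : nbrDegSum G v = 0 := by
      simp [nbrDegSum_eq_sum_degree, neighborFinset_eq_filter, hedge]
    rw [hs, Real.sqrt_zero]
    refine G.le_specRad (x := fun _ => 1) (Function.ne_iff.2 ⟨v, one_ne_zero⟩) ?_
    ext u
    simp [adjMatrix_mulVec_apply, neighborFinset_eq_filter, hedge]

end DegreeProduct

end SimpleGraph

theorem stmt11 {V : Type*} [Fintype V] (G : SimpleGraph V) (hG : G.Connected) :
    specRad G ≤ sSup {x : ℝ | ∃ v : V, x = Real.sqrt (nbrDegSum G v)} ∧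
    (specRad G = sSup {x : ℝ | ∃ v : V, x = Real.sqrt (nbrDegSum G v)} ↔
      ((∃ d, ∀ v : V, (G.neighborSet v).ncard = d) ∨
        ∃ X : Set V, (∀ u v, G.Adj u v → (u ∈ X ↔ v ∉ X)) ∧
          ∃ a b, (∀ v ∈ X, (G.neighborSet v).ncard = a) ∧
            ∀ v ∉ X, (G.neighborSet v).ncard = b)) := by
  classical
  have := hG.nonempty
  have hsqrt_le := le_sSup_setOf_exists_eq fun v => √(nbrDegSum G v)
  obtain ⟨v₀, hR⟩ := exists_sSup_setOf_exists_eq fun v => √(nbrDegSum G v)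
  set R := sSup {x : ℝ | ∃ v : V, x = √(nbrDegSum G v)}
  have hR0 : 0 ≤ R := hR ▸ Real.sqrt_nonneg _
  have hsR : ∀ v, nbrDegSum G v ≤ R ^ 2 := fun v => (Real.sqrt_le_left hR0).1 (hsqrt_le v)
  have hle : specRad G ≤ R := G.specRad_le hR0 fun t x hx0 hx =>
    (abs_le_of_sq_le_sq' (G.sq_le_of_mulVec_eq_smul hx0 hx hsR) hR0).2
  refine ⟨hle, fun heq => ?_, fun hreg => le_antisymm hle ?_⟩
  · obtain ⟨x, hx0, hx⟩ := G.exists_mulVec_eq_specRad_smul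
    rw [heq] at hx
    refine hG.exists_eq_or_bipartite fun u v w huv hvw => ?_
    simp only [ncard_neighborSet_eq_degree]
    exact G.degree_eq_of_adj_of_adj hG hx0 hx hsR huv hvw
  · obtain ⟨c, hc⟩ := exists_forall_adj_mul_eq hreg
    simp only [ncard_neighborSet_eq_degree] at hc
    rw [hR]
    exact G.sqrt_nbrDegSum_le_specRad hc v₀
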